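/- arXiv:2011.05589 — 2 statements merged into one kernel-verified Lean document; each statement's English description precedes it below -/
import Mathlib

section
/- Let T > 0, n ∈ ℕ, φ₀₀, φ₀₁, φ₁₀, φ₁₁, D_T ∈ Mₙ(ℝ), and F⁰ ∈ ℝⁿ. Let 𝒫 ∈ M₂ₙ(ℝ) be the block matrix with blocks [[φ₀₀, φ₀₁], [φ₁₀, φ₁₁]], Φ(t) := exp((T−t)𝒫), L := (D_T | −Iₙ), E₂ := (0ₙ ; Iₙ), and M(t) := L Φ(t) E₂; assume M(t) is invertible for every t ∈ [0,T] and let D(t) := −M(t)⁻¹ L Φ(t) E₁ with E₁ := (Iₙ ; 0ₙ). Define D⁰(t) := −M(t)⁻¹ L (∫ₜᵀ Φ(s) ds) v, where v := (F⁰ ; 0) ∈ ℝ²ⁿ. Then D⁰(T) = 0 and D⁰ is differentiable on [0,T] with (D⁰)′(t) = (φ₁₁ − D(t) φ₀₁) D⁰(t) − D(t) F⁰ for every t ∈ [0,T]. -/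
/-!
With `Ψ(t) = ∫ₜᵀ Φ`, we have `Φ' = -ΦP` and `Ψ' = -Φ`, so `M' = -LΦPE₂` and, from
`(M⁻¹)' = -M⁻¹M'M⁻¹`, `(D⁰)' = M⁻¹LΦv - M⁻¹LΦPE₂ D⁰`. The block form of `P` gives
`PE₂ = E₁φ₀₁ + E₂φ₁₁`; together with `M⁻¹LΦE₂ = 1`, `M⁻¹LΦE₁ = -D` and `v = E₁F⁰` this is
`(φ₁₁ - Dφ₀₁)D⁰ - DF⁰`.
-/

open Matrix Set

section LinftyOpNorm

variable {q : Type*} [Fintype q] [DecidableEq q]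

-- `HasDerivAt` only depends on the topology, so these statements do not depend on the norm;
-- the operator norm is a device to make matrices a Banach algebra in the proofs.
attribute [local instance] Matrix.linftyOpNormedRing Matrix.linftyOpNormedAlgebra

theorem hasDerivAt_exp_sub_smul (T : ℝ) (P : Matrix q q ℝ) (t : ℝ) :
    HasDerivAt (fun s : ℝ => NormedSpace.exp ((T - s) • P))
      (-(NormedSpace.exp ((T - t) • P) * P)) t := by
  have h := (hasDerivAt_exp_smul_const P (T - t)).scomp t ((hasDerivAt_id t).const_sub T)
  simp only [neg_smul, one_smul] at h
  exact h

theorem HasDerivAt.matrix_inv {M : ℝ → Matrix q q ℝ} {M' : Matrix q q ℝ} {t : ℝ}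
    (hM : HasDerivAt M M' t) (hu : IsUnit (M t)) :
    HasDerivAt (fun s => (M s)⁻¹) (-((M t)⁻¹ * M' * (M t)⁻¹)) t := by
  have h := (hasFDerivAt_ringInverse (𝕜 := ℝ) hu.unit).comp_hasDerivAt t hM
  simp only [Function.comp_def, ← nonsing_inv_eq_ringInverse, coe_units_inv, IsUnit.unit_spec]
    at h
  exact h

end LinftyOpNorm

attribute [local instance] Matrix.normedAddCommGroup Matrix.normedSpace

section EntrywiseCalculus

variable {m l p : Type*} [Fintype l]

theorem hasDerivAt_matrix_iff {f : ℝ → Matrix m l ℝ} {f' : Matrix m l ℝ} {t : ℝ} :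
    HasDerivAt f f' t ↔ ∀ i j, HasDerivAt (fun s => f s i j) (f' i j) t :=
  hasDerivAt_pi.trans <| forall_congr' fun _ => hasDerivAt_pi

theorem HasDerivAt.matrix_mul [Fintype p] {A : ℝ → Matrix m l ℝ} {B : ℝ → Matrix l p ℝ}
    {A' : Matrix m l ℝ} {B' : Matrix l p ℝ} {t : ℝ}
    (hA : HasDerivAt A A' t) (hB : HasDerivAt B B' t) :
    HasDerivAt (fun s => A s * B s) (A' * B t + A t * B') t := by
  rw [hasDerivAt_matrix_iff] at hA hB ⊢
  intro i j
  simpa only [mul_apply, Matrix.add_apply, Pi.mul_apply, Finset.sum_add_distrib] using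
    HasDerivAt.fun_sum fun k _ => (hA i k).mul (hB k j)

theorem HasDerivAt.matrix_mulVec {A : ℝ → Matrix m l ℝ} {w : ℝ → l → ℝ}
    {A' : Matrix m l ℝ} {w' : l → ℝ} {t : ℝ}
    (hA : HasDerivAt A A' t) (hw : HasDerivAt w w' t) :
    HasDerivAt (fun s => A s *ᵥ w s) (A' *ᵥ w t + A t *ᵥ w') t := by
  rw [hasDerivAt_matrix_iff] at hA
  rw [hasDerivAt_pi] at hw ⊢
  intro i
  simpa only [mulVec, dotProduct, Pi.add_apply, Pi.mul_apply, Finset.sum_add_distrib] using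
    HasDerivAt.fun_sum fun k _ => (hA i k).mul (hw k)

end EntrywiseCalculus

theorem mul_fromBlocks_mul_fromRows_zero_one {R : Type*} [Semiring R]
    {l m n : Type*} [Fintype m] [Fintype n] [DecidableEq m] [DecidableEq n]
    (K : Matrix l (m ⊕ n) R) (A : Matrix m m R) (B : Matrix m n R) (C : Matrix n m R)
    (D : Matrix n n R) :
    K * fromBlocks A B C D * (fromRows 0 1 : Matrix (m ⊕ n) n R) =
      K * (fromRows 1 0 : Matrix (m ⊕ n) m R) * B +
        K * (fromRows 0 1 : Matrix (m ⊕ n) n R) * D := by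
  simp only [Matrix.mul_assoc, ← Matrix.mul_add, fromBlocks_mul_fromRows, fromRows_mul]
  congr 1
  ext (i | i) j <;> simp

theorem HasDerivAt.matrix_inv_mulVec {q : Type*} [Fintype q] [DecidableEq q]
    {M : ℝ → Matrix q q ℝ} {w : ℝ → q → ℝ} {M' : Matrix q q ℝ} {w' : q → ℝ} {t : ℝ}
    (hM : HasDerivAt M M' t) (hu : IsUnit (M t)) (hw : HasDerivAt w w' t) :
    HasDerivAt (fun s => (M s)⁻¹ *ᵥ w s)
      ((M t)⁻¹ *ᵥ (w' - M' *ᵥ ((M t)⁻¹ *ᵥ w t))) t := by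
  convert (hM.matrix_inv hu).matrix_mulVec hw using 1
  simp only [mulVec_sub, neg_mulVec, mulVec_mulVec, Matrix.mul_assoc]
  abel

theorem Continuous.hasDerivAt_integral_left {E : Type*} [NormedAddCommGroup E]
    [NormedSpace ℝ E] [CompleteSpace E] {f : ℝ → E} (hf : Continuous f) (b t : ℝ) :
    HasDerivAt (fun u => ∫ x in u..b, f x) (-f t) t := by
  have hsymm : (fun u => ∫ x in u..b, f x) = fun u => -∫ x in b..u, f x :=
    funext fun u => intervalIntegral.integral_symm b u
  rw [hsymm]
  exact (hf.integral_hasStrictDerivAt b t).hasDerivAt.neg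

theorem riccati_offset_explicit_solution_general
    (T : ℝ) (n : ℕ)
    (φ00 φ01 φ10 φ11 : Matrix (Fin n) (Fin n) ℝ) (F0 : Fin n → ℝ)
    (P : Matrix (Fin n ⊕ Fin n) (Fin n ⊕ Fin n) ℝ)
    (hP : P = Matrix.fromBlocks φ00 φ01 φ10 φ11)
    (Φ : ℝ → Matrix (Fin n ⊕ Fin n) (Fin n ⊕ Fin n) ℝ)
    (hΦ : ∀ t, Φ t = NormedSpace.exp ((T - t) • P))
    (L : Matrix (Fin n) (Fin n ⊕ Fin n) ℝ)
    (E₁ E₂ : Matrix (Fin n ⊕ Fin n) (Fin n) ℝ)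
    (hE₁ : E₁ = Matrix.fromRows (1 : Matrix (Fin n) (Fin n) ℝ) 0)
    (hE₂ : E₂ = Matrix.fromRows 0 (1 : Matrix (Fin n) (Fin n) ℝ))
    (M : ℝ → Matrix (Fin n) (Fin n) ℝ)
    (hM : ∀ t, M t = L * Φ t * E₂)
    (hMinv : ∀ t ∈ Set.Icc (0 : ℝ) T, IsUnit (M t))
    (D : ℝ → Matrix (Fin n) (Fin n) ℝ)
    (hD : ∀ t, D t = -((M t)⁻¹ * L * Φ t * E₁))
    (v : Fin n ⊕ Fin n → ℝ) (hv : v = Sum.elim F0 0)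
    (D0 : ℝ → (Fin n → ℝ))
    (hD0 : ∀ t, D0 t = -(((M t)⁻¹ * L * ∫ s in t..T, Φ s) *ᵥ v)) :
    D0 T = 0 ∧
      ∀ t ∈ Set.Icc (0 : ℝ) T,
        HasDerivAt D0 ((φ11 - D t * φ01) *ᵥ D0 t - D t *ᵥ F0) t := by
  have hΦ' : ∀ s, HasDerivAt Φ (-(Φ s * P)) s := fun s => by
    rw [funext hΦ]; exact hasDerivAt_exp_sub_smul T P s
  have hΦc : Continuous Φ := continuous_iff_continuousAt.2 fun s => (hΦ' s).continuousAt
  refine ⟨by simp [hD0], fun t ht => ?_⟩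
  have hM' : HasDerivAt M (L * -(Φ t * P) * E₂) t := by
    simpa [funext hM] using ((hasDerivAt_const t L).matrix_mul (hΦ' t)).matrix_mul
      (hasDerivAt_const t E₂)
  have hw : HasDerivAt (fun s => L *ᵥ ((∫ u in s..T, Φ u) *ᵥ v)) (L *ᵥ (-Φ t *ᵥ v)) t := by
    simpa using (hasDerivAt_const t L).matrix_mulVec
      ((hΦc.hasDerivAt_integral_left T t).matrix_mulVec (hasDerivAt_const t v))
  have hD0fun : D0 = -fun s => (M s)⁻¹ *ᵥ (L *ᵥ ((∫ u in s..T, Φ u) *ᵥ v)) :=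
    funext fun s => by rw [hD0, Pi.neg_apply, mulVec_mulVec, mulVec_mulVec, Matrix.mul_assoc]
  have hMM : (M t)⁻¹ * L * Φ t * E₂ = 1 := by
    rw [Matrix.mul_assoc (M t)⁻¹, Matrix.mul_assoc (M t)⁻¹, ← hM,
      nonsing_inv_mul _ ((isUnit_iff_isUnit_det _).1 (hMinv t ht))]
  have hDt : (M t)⁻¹ * L * Φ t * E₁ = -D t := by rw [hD, neg_neg]
  have hK : (M t)⁻¹ * L * Φ t * P * E₂ = φ11 - D t * φ01 := by
    rw [hP, hE₂, mul_fromBlocks_mul_fromRows_zero_one, ← hE₁, ← hE₂, hDt, hMM, Matrix.one_mul,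
      Matrix.neg_mul, neg_add_eq_sub]
  have hKv : ((M t)⁻¹ * L * Φ t) *ᵥ v = -(D t *ᵥ F0) := by
    rw [hv, show Sum.elim F0 0 = E₁ *ᵥ F0 by simp [hE₁, fromRows_mulVec], mulVec_mulVec, hDt,
      neg_mulVec]
  have hy : (M t)⁻¹ *ᵥ (L *ᵥ ((∫ u in t..T, Φ u) *ᵥ v)) = -D0 t := by
    rw [hD0fun, Pi.neg_apply, neg_neg]
  refine (hD0fun ▸ (hM'.matrix_inv_mulVec (hMinv t ht) hw).neg).congr_deriv ?_
  rw [hy]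
  simp only [Matrix.mul_neg, Matrix.neg_mul, neg_mulVec, mulVec_neg, mulVec_sub, mulVec_mulVec,
    ← Matrix.mul_assoc, hK, hKv]
  abel

/-- Explicit solution of the linear terminal-value ODE for the offset term in
the affine ansatz: `D⁰(t) = −(LΦ(t)E₂)⁻¹ L (∫ₜᵀ Φ(s) ds) v` with `v = (F⁰; 0)`
satisfies `D⁰(T) = 0` and `(D⁰)' = (φ₁₁ − Dφ₀₁)D⁰ − DF⁰` on `[0,T]`. -/
theorem riccati_offset_explicit_solution
    (T : ℝ) (hT : 0 < T) (n : ℕ)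
    (φ00 φ01 φ10 φ11 DT : Matrix (Fin n) (Fin n) ℝ) (F0 : Fin n → ℝ)
    (P : Matrix (Fin n ⊕ Fin n) (Fin n ⊕ Fin n) ℝ)
    (hP : P = Matrix.fromBlocks φ00 φ01 φ10 φ11)
    (Φ : ℝ → Matrix (Fin n ⊕ Fin n) (Fin n ⊕ Fin n) ℝ)
    (hΦ : ∀ t, Φ t = NormedSpace.exp ((T - t) • P))
    (L : Matrix (Fin n) (Fin n ⊕ Fin n) ℝ)
    (hL : L = Matrix.fromCols DT (-(1 : Matrix (Fin n) (Fin n) ℝ)))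
    (E₁ E₂ : Matrix (Fin n ⊕ Fin n) (Fin n) ℝ)
    (hE₁ : E₁ = Matrix.fromRows (1 : Matrix (Fin n) (Fin n) ℝ) 0)
    (hE₂ : E₂ = Matrix.fromRows 0 (1 : Matrix (Fin n) (Fin n) ℝ))
    (M : ℝ → Matrix (Fin n) (Fin n) ℝ)
    (hM : ∀ t, M t = L * Φ t * E₂)
    (hMinv : ∀ t ∈ Set.Icc (0 : ℝ) T, IsUnit (M t))
    (D : ℝ → Matrix (Fin n) (Fin n) ℝ)
    (hD : ∀ t, D t = -((M t)⁻¹ * L * Φ t * E₁))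
    (v : Fin n ⊕ Fin n → ℝ) (hv : v = Sum.elim F0 0)
    (D0 : ℝ → (Fin n → ℝ))
    (hD0 : ∀ t, D0 t = -(((M t)⁻¹ * L * ∫ s in t..T, Φ s) *ᵥ v)) :
    D0 T = 0 ∧
      ∀ t ∈ Set.Icc (0 : ℝ) T,
        HasDerivAt D0 ((φ11 - D t * φ01) *ᵥ D0 t - D t *ᵥ F0) t :=
  riccati_offset_explicit_solution_general T n φ00 φ01 φ10 φ11 F0 P hP Φ hΦ L E₁ E₂ hE₁ hE₂ M hM
    hMinv D hD v hv D0 hD0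
end

section
/- Let T > 0, a, b₁, b₂ ≥ 0, and ρ̂, θ₁, θ₂, θ₃ > 0, and let Θ := (1,0) ∈ ℝ². Let A : [0,T] → M₂(ℝ) be continuous with ‖A(t) y‖ ≤ a ‖y‖ and ⟨y, A(t) y⟩ ≥ ρ̂ ‖y‖² for all t ∈ [0,T] and y ∈ ℝ², and let B⁽¹⁾, B⁽²⁾ : [0,T] → ℝ² be continuous with ‖B⁽¹⁾(t)‖ ≤ b₁ and ‖B⁽²⁾(t)‖ ≤ b₂ for all t. Let u, v : [0,T] → ℝ be continuous and let S : [0,T] → ℝ² be differentiable with S(0) = 0 and S′(t) = −A(t) S(t) + B⁽¹⁾(t) u(t) + B⁽²⁾(t) v(t). Then, with c := a²/(2θ₁ρ̂²) + 1/(2θ₂), ∫₀ᵀ v(t) ⟨Θ, −A(t) S(t) + B⁽¹⁾(t) u(t) + B⁽²⁾(t) v(t)⟩ dt ≤ ((θ₁+θ₂)/2 + b₂² (1 + 1/θ₃) c) ∫₀ᵀ v(t)² dt + (1+θ₃) b₁² c ∫₀ᵀ u(t)² dt. -/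
open Matrix Set intervalIntegral
open MeasureTheory (volume)

/-!
Differentiating `‖S‖²` along `S' = -A S + F`, coercivity and Young's inequality give
`(‖S‖²)' ≤ ρ⁻¹ ‖F‖² - ρ ‖S‖²`; integrating from `S 0 = 0` yields the energy estimate
`∫ ‖S‖² ≤ ρ⁻² ∫ ‖F‖²`. Young's inequality, applied pointwise to `v ⟨Θ, -A S⟩` and `v ⟨Θ, F⟩`,
bounds the cross term by `∫ v²`, `a² ∫ ‖S‖²` and `∫ ‖F‖²`, and the energy estimate reduces it to
`∫ v²` and `∫ ‖F‖²`; finally `‖u B₁ + v B₂‖² ≤ (1 + θ₃) b₁² u² + (1 + θ₃⁻¹) b₂² v²`.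
-/

section DotProduct

variable {ι : Type*} [Fintype ι]

theorem dotProduct_self_nonneg (x : ι → ℝ) : 0 ≤ x ⬝ᵥ x := by
  simpa using dotProduct_star_self_nonneg x

theorem two_mul_dotProduct_le {θ : ℝ} (hθ : 0 < θ) (x y : ι → ℝ) :
    2 * (x ⬝ᵥ y) ≤ θ * (x ⬝ᵥ x) + θ⁻¹ * (y ⬝ᵥ y) := by
  have h := dotProduct_self_nonneg (θ • x - y)
  simp only [sub_dotProduct, dotProduct_sub, smul_dotProduct, dotProduct_smul, smul_eq_mul,
    dotProduct_comm y x] at h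
  have : θ * (2 * (x ⬝ᵥ y)) ≤ θ * (θ * (x ⬝ᵥ x) + θ⁻¹ * (y ⬝ᵥ y)) := by
    rw [mul_add, ← mul_assoc θ θ⁻¹, mul_inv_cancel₀ hθ.ne']; linarith
  exact le_of_mul_le_mul_left this hθ

theorem add_dotProduct_self_le {θ : ℝ} (hθ : 0 < θ) (x y : ι → ℝ) :
    (x + y) ⬝ᵥ (x + y) ≤ (1 + θ) * (x ⬝ᵥ x) + (1 + θ⁻¹) * (y ⬝ᵥ y) := by
  have := two_mul_dotProduct_le hθ x y
  simp only [add_dotProduct, dotProduct_add, dotProduct_comm y x]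
  linarith

theorem smul_add_smul_dotProduct_self_le {θ b₁ b₂ : ℝ} (hθ : 0 < θ) {x y : ι → ℝ}
    (hx : x ⬝ᵥ x ≤ b₁ ^ 2) (hy : y ⬝ᵥ y ≤ b₂ ^ 2) (p q : ℝ) :
    (p • x + q • y) ⬝ᵥ (p • x + q • y) ≤ (1 + θ) * b₁ ^ 2 * p ^ 2 + (1 + θ⁻¹) * b₂ ^ 2 * q ^ 2 :=
  calc (p • x + q • y) ⬝ᵥ (p • x + q • y)
      ≤ (1 + θ) * ((p • x) ⬝ᵥ (p • x)) + (1 + θ⁻¹) * ((q • y) ⬝ᵥ (q • y)) :=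
        add_dotProduct_self_le hθ _ _
    _ = (1 + θ) * (x ⬝ᵥ x) * p ^ 2 + (1 + θ⁻¹) * (y ⬝ᵥ y) * q ^ 2 := by
        simp only [smul_dotProduct, dotProduct_smul, smul_eq_mul]; ring
    _ ≤ (1 + θ) * b₁ ^ 2 * p ^ 2 + (1 + θ⁻¹) * b₂ ^ 2 * q ^ 2 := by
        have : 0 < 1 + θ := by linarith
        gcongr

theorem mul_dotProduct_neg_add_le {θ₁ θ₂ : ℝ} (hθ₁ : 0 < θ₁) (hθ₂ : 0 < θ₂) {e : ι → ℝ}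
    (he : e ⬝ᵥ e = 1) (s : ℝ) (y z : ι → ℝ) :
    s * (e ⬝ᵥ (-y + z)) ≤
      (θ₁ + θ₂) / 2 * s ^ 2 + (2 * θ₁)⁻¹ * (y ⬝ᵥ y) + (2 * θ₂)⁻¹ * (z ⬝ᵥ z) := by
  have hy := two_mul_dotProduct_le hθ₁ (s • e) (-y)
  have hz := two_mul_dotProduct_le hθ₂ (s • e) z
  simp only [smul_dotProduct, dotProduct_smul, smul_eq_mul, he, dotProduct_neg,
    neg_dotProduct, neg_neg] at hy hz
  rw [dotProduct_add, dotProduct_neg]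
  linear_combination (hy + hz) / 2

end DotProduct

theorem HasDerivWithinAt.dotProduct_self {ι : Type*} [Fintype ι] {S : ℝ → ι → ℝ} {S' : ι → ℝ}
    {s : Set ℝ} {t : ℝ} (h : HasDerivWithinAt S S' s t) :
    HasDerivWithinAt (fun t => S t ⬝ᵥ S t) (2 * (S t ⬝ᵥ S')) s t := by
  have hi := hasDerivWithinAt_pi.1 h
  refine (HasDerivWithinAt.fun_sum (u := Finset.univ) fun i _ => (hi i).mul (hi i)).congr_deriv ?_
  simp only [dotProduct, Finset.mul_sum]
  exact Finset.sum_congr rfl fun i _ => by ring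

theorem ContinuousOn.dotProduct {α ι : Type*} [TopologicalSpace α] [Fintype ι] {s : Set α}
    {X Y : α → ι → ℝ} (hX : ContinuousOn X s) (hY : ContinuousOn Y s) :
    ContinuousOn (fun t => X t ⬝ᵥ Y t) s :=
  (continuous_fst.dotProduct continuous_snd).comp_continuousOn (hX.prodMk hY)

section Integral

variable {ι : Type*} [Fintype ι] {a b : ℝ}

theorem integral_dotProduct_self_le_of_coercive {ρ : ℝ} (hab : a ≤ b) (hρ : 0 < ρ)
    {A : ℝ → Matrix ι ι ℝ} {S F : ℝ → ι → ℝ}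
    (hA : ∀ t ∈ Icc a b, ∀ y : ι → ℝ, ρ * (y ⬝ᵥ y) ≤ y ⬝ᵥ (A t *ᵥ y))
    (hF : ContinuousOn F (Icc a b)) (hSa : S a = 0)
    (hS : ∀ t ∈ Icc a b, HasDerivWithinAt S (-(A t *ᵥ S t) + F t) (Icc a b) t) :
    ∫ t in a..b, S t ⬝ᵥ S t ≤ (ρ ^ 2)⁻¹ * ∫ t in a..b, F t ⬝ᵥ F t := by
  have hSc : ContinuousOn S (Icc a b) := fun t ht => (hS t ht).continuousWithinAt
  have hSS := (hSc.dotProduct hSc).intervalIntegrable_of_Icc (μ := volume) hab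
  have hFF := (hF.dotProduct hF).intervalIntegrable_of_Icc (μ := volume) hab
  have energy : S b ⬝ᵥ S b - S a ⬝ᵥ S a ≤
      ∫ t in a..b, (ρ⁻¹ * (F t ⬝ᵥ F t) - ρ * (S t ⬝ᵥ S t)) := by
    refine sub_le_integral_of_hasDeriv_right_of_le hab (hSc.dotProduct hSc)
      (fun t ht => (hS t (Ioo_subset_Icc_self ht)).dotProduct_self.mono_of_mem_nhdsWithin
        (Icc_mem_nhdsGT_of_mem ⟨ht.1.le, ht.2⟩))
      (((hF.dotProduct hF).const_smul ρ⁻¹).sub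
        ((hSc.dotProduct hSc).const_smul ρ)).integrableOn_Icc fun t ht => ?_
    have hcoer := hA t (Ioo_subset_Icc_self ht) (S t)
    have hyoung := two_mul_dotProduct_le hρ (S t) (F t)
    rw [dotProduct_add, dotProduct_neg]
    linarith
  rw [integral_sub (hFF.const_mul _) (hSS.const_mul _), integral_const_mul, integral_const_mul,
    hSa, zero_dotProduct] at energy
  have hρS : ρ * ∫ t in a..b, S t ⬝ᵥ S t ≤ ρ⁻¹ * ∫ t in a..b, F t ⬝ᵥ F t := by
    linarith [dotProduct_self_nonneg (S b)]
  calc ∫ t in a..b, S t ⬝ᵥ S t = ρ⁻¹ * (ρ * ∫ t in a..b, S t ⬝ᵥ S t) := by field_simp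
    _ ≤ ρ⁻¹ * (ρ⁻¹ * ∫ t in a..b, F t ⬝ᵥ F t) := by gcongr
    _ = (ρ ^ 2)⁻¹ * ∫ t in a..b, F t ⬝ᵥ F t := by ring

theorem integral_smul_add_smul_dotProduct_self_le {θ b₁ b₂ : ℝ} (hab : a ≤ b) (hθ : 0 < θ)
    {B₁ B₂ : ℝ → ι → ℝ} {u v : ℝ → ℝ} (hB₁c : ContinuousOn B₁ (Icc a b))
    (hB₂c : ContinuousOn B₂ (Icc a b)) (huc : ContinuousOn u (Icc a b))
    (hvc : ContinuousOn v (Icc a b)) (hB₁ : ∀ t ∈ Icc a b, B₁ t ⬝ᵥ B₁ t ≤ b₁ ^ 2)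
    (hB₂ : ∀ t ∈ Icc a b, B₂ t ⬝ᵥ B₂ t ≤ b₂ ^ 2) :
    ∫ t in a..b, (u t • B₁ t + v t • B₂ t) ⬝ᵥ (u t • B₁ t + v t • B₂ t) ≤
      (1 + θ) * b₁ ^ 2 * (∫ t in a..b, u t ^ 2) +
        (1 + θ⁻¹) * b₂ ^ 2 * ∫ t in a..b, v t ^ 2 := by
  have hF := (huc.smul hB₁c).add (hvc.smul hB₂c)
  have hu2 : IntervalIntegrable (fun t => u t ^ 2) volume a b :=
    (huc.pow 2).intervalIntegrable_of_Icc hab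
  have hv2 : IntervalIntegrable (fun t => v t ^ 2) volume a b :=
    (hvc.pow 2).intervalIntegrable_of_Icc hab
  rw [← integral_const_mul, ← integral_const_mul,
    ← integral_add (hu2.const_mul _) (hv2.const_mul _)]
  exact integral_mono_on hab ((hF.dotProduct hF).intervalIntegrable_of_Icc hab)
    ((hu2.const_mul _).add (hv2.const_mul _))
    fun t ht => smul_add_smul_dotProduct_self_le hθ (hB₁ t ht) (hB₂ t ht) (u t) (v t)

theorem integral_mul_dotProduct_neg_mulVec_add_le {α θ₁ θ₂ : ℝ} (hab : a ≤ b) (hθ₁ : 0 < θ₁)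
    (hθ₂ : 0 < θ₂) {e : ι → ℝ} (he : e ⬝ᵥ e = 1) {A : ℝ → Matrix ι ι ℝ} {s : ℝ → ℝ}
    {S F : ℝ → ι → ℝ} (hAc : ContinuousOn A (Icc a b)) (hsc : ContinuousOn s (Icc a b))
    (hSc : ContinuousOn S (Icc a b)) (hFc : ContinuousOn F (Icc a b))
    (hA : ∀ t ∈ Icc a b, ∀ y : ι → ℝ, (A t *ᵥ y) ⬝ᵥ (A t *ᵥ y) ≤ α ^ 2 * (y ⬝ᵥ y)) :
    ∫ t in a..b, s t * (e ⬝ᵥ (-(A t *ᵥ S t) + F t)) ≤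
      (θ₁ + θ₂) / 2 * (∫ t in a..b, s t ^ 2) + (2 * θ₁)⁻¹ * α ^ 2 * (∫ t in a..b, S t ⬝ᵥ S t) +
        (2 * θ₂)⁻¹ * ∫ t in a..b, F t ⬝ᵥ F t := by
  have hASc : ContinuousOn (fun t => A t *ᵥ S t) (Icc a b) :=
    (continuous_fst.matrix_mulVec continuous_snd).comp_continuousOn (hAc.prodMk hSc)
  have hs2 : IntervalIntegrable (fun t => s t ^ 2) volume a b :=
    (hsc.pow 2).intervalIntegrable_of_Icc hab
  have hSS := (hSc.dotProduct hSc).intervalIntegrable_of_Icc (μ := volume) hab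
  have hFF := (hFc.dotProduct hFc).intervalIntegrable_of_Icc (μ := volume) hab
  rw [← integral_const_mul, ← integral_const_mul, ← integral_const_mul,
    ← integral_add (hs2.const_mul _) (hSS.const_mul _),
    ← integral_add ((hs2.const_mul _).add (hSS.const_mul _)) (hFF.const_mul _)]
  refine integral_mono_on hab
    ((hsc.mul (continuousOn_const.dotProduct (hASc.neg.add hFc))).intervalIntegrable_of_Icc hab)
    (((hs2.const_mul _).add (hSS.const_mul _)).add (hFF.const_mul _)) fun t ht => ?_
  have young := mul_dotProduct_neg_add_le hθ₁ hθ₂ he (s t) (A t *ᵥ S t) (F t)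
  have hAS := mul_le_mul_of_nonneg_left (hA t ht (S t))
    (inv_nonneg.2 (by positivity : (0 : ℝ) ≤ 2 * θ₁))
  linarith

end Integral

theorem verification_cross_term_estimate_general
    (T : ℝ) (hT : 0 < T)
    (a b₁ b₂ : ℝ)
    (ρhat θ₁ θ₂ θ₃ : ℝ) (hρ : 0 < ρhat) (hθ₁ : 0 < θ₁) (hθ₂ : 0 < θ₂)
    (hθ₃ : 0 < θ₃)
    (Θ : Fin 2 → ℝ) (hΘ : Θ = ![1, 0])
    (A : ℝ → Matrix (Fin 2) (Fin 2) ℝ) (B₁ B₂ : ℝ → (Fin 2 → ℝ))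
    (hAc : ContinuousOn A (Set.Icc 0 T))
    (hB₁c : ContinuousOn B₁ (Set.Icc 0 T)) (hB₂c : ContinuousOn B₂ (Set.Icc 0 T))
    (hAbound : ∀ t ∈ Set.Icc (0 : ℝ) T, ∀ y : Fin 2 → ℝ,
      (A t *ᵥ y) ⬝ᵥ (A t *ᵥ y) ≤ a ^ 2 * (y ⬝ᵥ y))
    (hAcoer : ∀ t ∈ Set.Icc (0 : ℝ) T, ∀ y : Fin 2 → ℝ,
      ρhat * (y ⬝ᵥ y) ≤ y ⬝ᵥ (A t *ᵥ y))
    (hB₁bound : ∀ t ∈ Set.Icc (0 : ℝ) T, B₁ t ⬝ᵥ B₁ t ≤ b₁ ^ 2)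
    (hB₂bound : ∀ t ∈ Set.Icc (0 : ℝ) T, B₂ t ⬝ᵥ B₂ t ≤ b₂ ^ 2)
    (u v : ℝ → ℝ)
    (huc : ContinuousOn u (Set.Icc 0 T)) (hvc : ContinuousOn v (Set.Icc 0 T))
    (S : ℝ → (Fin 2 → ℝ)) (hS0 : S 0 = 0)
    (hS : ∀ t ∈ Set.Icc (0 : ℝ) T,
      HasDerivWithinAt S (-(A t *ᵥ S t) + u t • B₁ t + v t • B₂ t)
        (Set.Icc (0 : ℝ) T) t)
    (c : ℝ) (hc : c = a ^ 2 / (2 * θ₁ * ρhat ^ 2) + 1 / (2 * θ₂)) :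
    (∫ t in (0:ℝ)..T,
        v t * (Θ ⬝ᵥ (-(A t *ᵥ S t) + u t • B₁ t + v t • B₂ t)))
      ≤ ((θ₁ + θ₂) / 2 + b₂ ^ 2 * (1 + 1 / θ₃) * c)
          * (∫ t in (0:ℝ)..T, (v t) ^ 2)
        + (1 + θ₃) * b₁ ^ 2 * c * ∫ t in (0:ℝ)..T, (u t) ^ 2 := by
  have hSc : ContinuousOn S (Icc 0 T) := fun t ht => (hS t ht).continuousWithinAt
  have hFc : ContinuousOn (fun t => u t • B₁ t + v t • B₂ t) (Icc 0 T) :=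
    (huc.smul hB₁c).add (hvc.smul hB₂c)
  have cross := integral_mul_dotProduct_neg_mulVec_add_le hT.le hθ₁ hθ₂
    (by simp [hΘ] : Θ ⬝ᵥ Θ = 1) hAc hvc hSc hFc hAbound
  have energy := integral_dotProduct_self_le_of_coercive hT.le hρ hAcoer hFc hS0
    fun t ht => by simpa only [add_assoc] using hS t ht
  have forcing := integral_smul_add_smul_dotProduct_self_le hT.le hθ₃ hB₁c hB₂c huc hvc
    hB₁bound hB₂bound
  have hc0 : 0 ≤ c := by rw [hc]; positivity
  simp only [← add_assoc] at cross
  set U := ∫ t in (0:ℝ)..T, u t ^ 2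
  set V := ∫ t in (0:ℝ)..T, v t ^ 2
  set W := ∫ t in (0:ℝ)..T, S t ⬝ᵥ S t
  set Φ := ∫ t in (0:ℝ)..T, (u t • B₁ t + v t • B₂ t) ⬝ᵥ (u t • B₁ t + v t • B₂ t)
  calc _ ≤ (θ₁ + θ₂) / 2 * V + (2 * θ₁)⁻¹ * a ^ 2 * W + (2 * θ₂)⁻¹ * Φ := cross
    _ ≤ (θ₁ + θ₂) / 2 * V + (2 * θ₁)⁻¹ * a ^ 2 * ((ρhat ^ 2)⁻¹ * Φ) + (2 * θ₂)⁻¹ * Φ := by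
        gcongr
    _ = (θ₁ + θ₂) / 2 * V + c * Φ := by rw [hc]; ring
    _ ≤ (θ₁ + θ₂) / 2 * V + c * ((1 + θ₃) * b₁ ^ 2 * U + (1 + θ₃⁻¹) * b₂ ^ 2 * V) := by gcongr
    _ = _ := by ring

/-- Key estimate in the verification theorem: the cross term in the cost
decomposition is controlled by the quadratic deviation costs via Young's
inequality and the coercivity of `A` (Euclidean norms expressed through dot
products: `‖z‖ ≤ m` is written `z ⬝ᵥ z ≤ m²`). -/
theorem verification_cross_term_estimate
    (T : ℝ) (hT : 0 < T)
    (a b₁ b₂ : ℝ) (ha : 0 ≤ a) (hb₁ : 0 ≤ b₁) (hb₂ : 0 ≤ b₂)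
    (ρhat θ₁ θ₂ θ₃ : ℝ) (hρ : 0 < ρhat) (hθ₁ : 0 < θ₁) (hθ₂ : 0 < θ₂)
    (hθ₃ : 0 < θ₃)
    (Θ : Fin 2 → ℝ) (hΘ : Θ = ![1, 0])
    (A : ℝ → Matrix (Fin 2) (Fin 2) ℝ) (B₁ B₂ : ℝ → (Fin 2 → ℝ))
    (hAc : ContinuousOn A (Set.Icc 0 T))
    (hB₁c : ContinuousOn B₁ (Set.Icc 0 T)) (hB₂c : ContinuousOn B₂ (Set.Icc 0 T))
    (hAbound : ∀ t ∈ Set.Icc (0 : ℝ) T, ∀ y : Fin 2 → ℝ,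
      (A t *ᵥ y) ⬝ᵥ (A t *ᵥ y) ≤ a ^ 2 * (y ⬝ᵥ y))
    (hAcoer : ∀ t ∈ Set.Icc (0 : ℝ) T, ∀ y : Fin 2 → ℝ,
      ρhat * (y ⬝ᵥ y) ≤ y ⬝ᵥ (A t *ᵥ y))
    (hB₁bound : ∀ t ∈ Set.Icc (0 : ℝ) T, B₁ t ⬝ᵥ B₁ t ≤ b₁ ^ 2)
    (hB₂bound : ∀ t ∈ Set.Icc (0 : ℝ) T, B₂ t ⬝ᵥ B₂ t ≤ b₂ ^ 2)
    (u v : ℝ → ℝ)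
    (huc : ContinuousOn u (Set.Icc 0 T)) (hvc : ContinuousOn v (Set.Icc 0 T))
    (S : ℝ → (Fin 2 → ℝ)) (hS0 : S 0 = 0)
    (hS : ∀ t ∈ Set.Icc (0 : ℝ) T,
      HasDerivWithinAt S (-(A t *ᵥ S t) + u t • B₁ t + v t • B₂ t)
        (Set.Icc (0 : ℝ) T) t)
    (c : ℝ) (hc : c = a ^ 2 / (2 * θ₁ * ρhat ^ 2) + 1 / (2 * θ₂)) :
    (∫ t in (0:ℝ)..T,
        v t * (Θ ⬝ᵥ (-(A t *ᵥ S t) + u t • B₁ t + v t • B₂ t)))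
      ≤ ((θ₁ + θ₂) / 2 + b₂ ^ 2 * (1 + 1 / θ₃) * c)
          * (∫ t in (0:ℝ)..T, (v t) ^ 2)
        + (1 + θ₃) * b₁ ^ 2 * c * ∫ t in (0:ℝ)..T, (u t) ^ 2 :=
  verification_cross_term_estimate_general T hT a b₁ b₂ ρhat θ₁ θ₂ θ₃ hρ hθ₁ hθ₂ hθ₃ Θ hΘ A B₁ B₂
    hAc hB₁c hB₂c hAbound hAcoer hB₁bound hB₂bound u v huc hvc S hS0 hS c hc
end
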